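/- Let G = (V,E) be an r-uniform hypergraph on vertex set [n] and let x = (x_1,...,x_n) be an optimal weighting for G with exactly k nonzero weights x_1,...,x_k, such that the number of nonzero weights is minimal among all optimal weightings. Then for every pair i < j ≤ k: (a) λ(E_i, x) = λ(E_j, x) = r·λ(G), and (b) there is an edge of G containing both i and j. -/

import Mathlib

open Finset

/-- The polynomial λ(G, w) = Σ_{e ∈ E} Π_{i ∈ e} w i. -/
def lagPoly (E : Finset (Finset ℕ)) (w : ℕ → ℝ) : ℝ :=
  ∑ e ∈ E, ∏ i ∈ e, w i

/-- A feasible weighting on vertex set [n] = {0, …, n-1}. -/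
def IsWeighting (n : ℕ) (w : ℕ → ℝ) : Prop :=
  (∀ i, 0 ≤ w i) ∧ (∀ i, n ≤ i → w i = 0) ∧ ∑ i ∈ Finset.range n, w i = 1

/-- The Lagrangian of a hypergraph with edge set `E`. -/
noncomputable def lag (E : Finset (Finset ℕ)) : ℝ :=
  sSup {x | ∃ n w, IsWeighting n w ∧ x = lagPoly E w}

/-- The complete r-uniform hypergraph on vertex set {0, …, t-1}. -/
def completeG (t r : ℕ) : Finset (Finset ℕ) :=
  (Finset.range t).powersetCard r

/-- The link E_i of vertex i. -/
def link (E : Finset (Finset ℕ)) (i : ℕ) : Finset (Finset ℕ) :=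
  (E.filter (fun e => i ∈ e)).image (fun e => e.erase i)

/-!
Moving weight `t` from vertex `j` to vertex `i` changes the Lagrangian polynomial by
`t (λ(E_i) - λ(E_j)) - t² λ(E_ij)`, where `E_ij` is the link of `j` in `E_i`. At an optimal
weighting the first-order term cannot be positive for small `t > 0`, so all vertices of positive
weight have the same link value; Euler's identity `Σ_m w_m λ(E_m, w) = r λ(E, w)` then
identifies it as `r λ(G)`. If no edge contains both `i` and `j`, then `E_ij` is empty, so moving
all of `j`'s weight onto `i` keeps the weighting optimal while shrinking its support.
-/

def transfer (w : ℕ → ℝ) (a b : ℕ) (t : ℝ) : ℕ → ℝ :=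
  w + Pi.single a t - Pi.single b t

section Weighting

variable {w : ℕ → ℝ} {a b : ℕ} {t : ℝ}

lemma transfer_apply_left (hab : a ≠ b) : transfer w a b t a = w a + t := by
  simp [transfer, hab]

lemma transfer_apply_right (hab : a ≠ b) : transfer w a b t b = w b - t := by
  simp [transfer, hab.symm]

lemma transfer_apply_of_ne {m : ℕ} (ha : m ≠ a) (hb : m ≠ b) : transfer w a b t m = w m := by
  simp [transfer, ha, hb]

lemma IsWeighting.lt_of_ne_zero {n : ℕ} (hw : IsWeighting n w) {i : ℕ} (hi : w i ≠ 0) :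
    i < n :=
  not_le.1 fun h => hi (hw.2.1 i h)

lemma IsWeighting.le_one {n : ℕ} (hw : IsWeighting n w) (i : ℕ) : w i ≤ 1 := by
  by_cases hi : i < n
  · exact hw.2.2 ▸ single_le_sum (fun m _ => hw.1 m) (mem_range.2 hi)
  · rw [hw.2.1 i (not_lt.1 hi)]
    exact zero_le_one

lemma IsWeighting.transfer {n : ℕ} (hw : IsWeighting n w) (hab : a ≠ b) (ha : a < n)
    (hb : b < n) (ht : 0 ≤ t) (htb : t ≤ w b) : IsWeighting n (transfer w a b t) := by
  refine ⟨fun m => ?_, fun m hm => ?_, ?_⟩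
  · rcases eq_or_ne m a with rfl | hma
    · rw [transfer_apply_left hab]; linarith [hw.1 m]
    rcases eq_or_ne m b with rfl | hmb
    · rw [transfer_apply_right hab]; linarith
    · rw [transfer_apply_of_ne hma hmb]; exact hw.1 m
  · rw [transfer_apply_of_ne (by omega) (by omega)]; exact hw.2.1 m hm
  · simp only [_root_.transfer, Pi.add_apply, Pi.sub_apply, sum_sub_distrib, sum_add_distrib,
      sum_pi_single', mem_range, ha, hb, if_true, hw.2.2]
    ring

end Weighting

section LagPoly

variable {E : Finset (Finset ℕ)} {w : ℕ → ℝ}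

lemma lagPoly_nonneg (hw : ∀ m, 0 ≤ w m) : 0 ≤ lagPoly E w :=
  sum_nonneg fun _ _ => prod_nonneg fun m _ => hw m

lemma lagPoly_congr {v : ℕ → ℝ} (h : ∀ e ∈ E, ∀ m ∈ e, w m = v m) :
    lagPoly E w = lagPoly E v :=
  sum_congr rfl fun e he => prod_congr rfl (h e he)

lemma lagPoly_le_card {n : ℕ} (hw : IsWeighting n w) : lagPoly E w ≤ #E := by
  calc lagPoly E w ≤ ∑ _e ∈ E, (1 : ℝ) :=
        sum_le_sum fun e _ => prod_le_one (fun m _ => hw.1 m) (fun m _ => hw.le_one m)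
    _ = #E := by simp

lemma lagPoly_le_lag {n : ℕ} (hw : IsWeighting n w) : lagPoly E w ≤ lag E :=
  le_csSup ⟨#E, by rintro x ⟨m, v, hv, rfl⟩; exact lagPoly_le_card hv⟩ ⟨n, w, hw, rfl⟩

lemma notMem_of_mem_link {i : ℕ} {A : Finset ℕ} (hA : A ∈ link E i) : i ∉ A := by
  obtain ⟨e, -, rfl⟩ := mem_image.1 hA
  exact notMem_erase i e

lemma notMem_of_mem_link_of_forall_notMem {i m : ℕ} {A : Finset ℕ} (h : ∀ e ∈ E, m ∉ e)
    (hA : A ∈ link E i) : m ∉ A := by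
  obtain ⟨e, he, rfl⟩ := mem_image.1 hA
  exact fun hm => h e (mem_filter.1 he).1 (mem_of_mem_erase hm)

lemma mul_lagPoly_link (i : ℕ) :
    w i * lagPoly (link E i) w = ∑ e ∈ E with i ∈ e, ∏ m ∈ e, w m := by
  have hinj : Set.InjOn (fun e : Finset ℕ => e.erase i) (E.filter (i ∈ ·)) := by
    intro e he f hf hef
    rw [← insert_erase (mem_filter.1 he).2, ← insert_erase (mem_filter.1 hf).2]
    exact congrArg (insert i) hef
  rw [lagPoly, link, sum_image hinj, mul_sum]
  exact sum_congr rfl fun e he => mul_prod_erase e w (mem_filter.1 he).2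

variable (E w) in
lemma lagPoly_eq_add_mul_lagPoly_link (i : ℕ) :
    lagPoly E w = lagPoly (E.filter (i ∉ ·)) w + w i * lagPoly (link E i) w := by
  rw [mul_lagPoly_link, lagPoly, lagPoly, add_comm]
  exact (sum_filter_add_sum_filter_not E (i ∈ ·) _).symm

/-- Euler's identity for the homogeneous polynomial `lagPoly E` of degree `r`. -/
lemma sum_mul_lagPoly_link {r n : ℕ} (hE : E ⊆ (range n).powersetCard r) :
    ∑ i ∈ range n, w i * lagPoly (link E i) w = r * lagPoly E w := by
  simp_rw [mul_lagPoly_link, sum_filter]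
  rw [sum_comm, lagPoly, mul_sum]
  refine sum_congr rfl fun e he => ?_
  obtain ⟨hsub, hcard⟩ := mem_powersetCard.1 (hE he)
  rw [sum_ite_mem, inter_eq_right.2 hsub, sum_const, hcard, nsmul_eq_mul]

end LagPoly

section TwoVertices

variable (E : Finset (Finset ℕ)) {i j : ℕ}

lemma link_filter_notMem (hij : i ≠ j) :
    link (E.filter (j ∉ ·)) i = (link E i).filter (j ∉ ·) := by
  rw [link, link, filter_image, filter_filter, filter_filter]
  congr 1
  refine filter_congr fun e _ => ?_
  simp only [mem_erase, ne_eq, hij.symm, not_false_eq_true, true_and]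
  tauto

lemma link_link_comm (hij : i ≠ j) : link (link E i) j = link (link E j) i := by
  simp only [link, filter_image, image_image, filter_filter]
  have hfilter : E.filter (fun e => i ∈ e ∧ j ∈ e.erase i)
      = E.filter (fun e => j ∈ e ∧ i ∈ e.erase j) := by
    refine filter_congr fun e _ => ?_
    simp only [mem_erase, ne_eq, hij, hij.symm, not_false_eq_true, true_and]
    tauto
  rw [hfilter]
  exact image_congr fun e _ => erase_right_comm

lemma lagPoly_link_link_eq_zero (h : ∀ e ∈ E, i ∈ e → j ∉ e) (w : ℕ → ℝ) :
    lagPoly (link (link E i) j) w = 0 := by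
  suffices link (link E i) j = ∅ by simp [this, lagPoly]
  refine image_eq_empty.2 (filter_eq_empty_iff.2 fun A hA hjA => ?_)
  obtain ⟨e, he, rfl⟩ := mem_image.1 hA
  exact h e (mem_filter.1 he).1 (mem_filter.1 he).2 (mem_of_mem_erase hjA)

lemma lagPoly_transfer (hij : i ≠ j) (w : ℕ → ℝ) (t : ℝ) :
    lagPoly E (transfer w i j t) = lagPoly E w
      + t * (lagPoly (link E i) w - lagPoly (link E j) w)
      - t ^ 2 * lagPoly (link (link E i) j) w := by
  set v := transfer w i j t
  -- the four pieces of `E` below avoid `i` and `j`, so `v` and `w` agree on them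
  have hagree : ∀ S : Finset (Finset ℕ), (∀ e ∈ S, i ∉ e) → (∀ e ∈ S, j ∉ e) →
      lagPoly S v = lagPoly S w := fun S hi hj =>
    lagPoly_congr fun e he m hm =>
      transfer_apply_of_ne (fun h => hi e he (h ▸ hm)) (fun h => hj e he (h ▸ hm))
  have hA := hagree ((E.filter (i ∉ ·)).filter (j ∉ ·))
    (fun e he => (mem_filter.1 (mem_filter.1 he).1).2) (fun e he => (mem_filter.1 he).2)
  have hB := hagree (link (E.filter (i ∉ ·)) j)
    (fun _ => notMem_of_mem_link_of_forall_notMem fun e he => (mem_filter.1 he).2)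
    (fun _ => notMem_of_mem_link)
  have hC := hagree ((link E i).filter (j ∉ ·))
    (fun A hA => notMem_of_mem_link (mem_filter.1 hA).1) (fun A hA => (mem_filter.1 hA).2)
  have hD := hagree (link (link E i) j)
    (fun _ => notMem_of_mem_link_of_forall_notMem fun _ => notMem_of_mem_link)
    (fun _ => notMem_of_mem_link)
  have hexpand : ∀ u : ℕ → ℝ, lagPoly E u
      = lagPoly ((E.filter (i ∉ ·)).filter (j ∉ ·)) u
        + u j * lagPoly (link (E.filter (i ∉ ·)) j) u
        + u i * (lagPoly ((link E i).filter (j ∉ ·)) u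
          + u j * lagPoly (link (link E i) j) u) := fun u => by
    rw [lagPoly_eq_add_mul_lagPoly_link E u i,
      lagPoly_eq_add_mul_lagPoly_link (E.filter (i ∉ ·)) u j,
      lagPoly_eq_add_mul_lagPoly_link (link E i) u j]
  have hlink_i := lagPoly_eq_add_mul_lagPoly_link (link E i) w j
  have hlink_j := lagPoly_eq_add_mul_lagPoly_link (link E j) w i
  rw [← link_filter_notMem E hij.symm, ← link_link_comm E hij] at hlink_j
  have hvi : v i = w i + t := transfer_apply_left hij
  have hvj : v j = w j - t := transfer_apply_right hij
  rw [hexpand v, hexpand w, hA, hB, hC, hD, hvi, hvj, hlink_i, hlink_j]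
  ring

end TwoVertices

section Optimal

variable {r n : ℕ} {E : Finset (Finset ℕ)} {w : ℕ → ℝ}

lemma lagPoly_link_le_of_optimal (hw : IsWeighting n w) (hopt : lagPoly E w = lag E) {a b : ℕ}
    (hab : a ≠ b) (ha : a < n) (hb : 0 < w b) :
    lagPoly (link E a) w ≤ lagPoly (link E b) w := by
  by_contra! hlt
  set d := lagPoly (link E a) w - lagPoly (link E b) w
  set R := lagPoly (link (link E a) b) w
  have hd : 0 < d := sub_pos.2 hlt
  have hR : 0 ≤ R := lagPoly_nonneg hw.1
  -- a step small enough that the first-order gain `t d` beats the loss `t² R`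
  set t := min (w b) (d / (R + 1))
  have ht : 0 < t := lt_min hb (by positivity)
  have htR : t * R < d :=
    calc t * R ≤ d / (R + 1) * R := mul_le_mul_of_nonneg_right (min_le_right _ _) hR
      _ < d := by rw [div_mul_eq_mul_div, div_lt_iff₀ (by positivity)]; nlinarith
  have hle := lagPoly_le_lag (E := E)
    (hw.transfer hab ha (hw.lt_of_ne_zero hb.ne') ht.le (min_le_left _ _))
  rw [lagPoly_transfer E hab, hopt] at hle
  nlinarith

lemma lagPoly_link_eq_of_optimal (hw : IsWeighting n w) (hopt : lagPoly E w = lag E) {a b : ℕ}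
    (ha : 0 < w a) (hb : 0 < w b) : lagPoly (link E a) w = lagPoly (link E b) w := by
  rcases eq_or_ne a b with rfl | hab
  · rfl
  exact le_antisymm (lagPoly_link_le_of_optimal hw hopt hab (hw.lt_of_ne_zero ha.ne') hb)
    (lagPoly_link_le_of_optimal hw hopt hab.symm (hw.lt_of_ne_zero hb.ne') ha)

lemma lagPoly_link_eq_mul_lag (hE : E ⊆ (range n).powersetCard r) (hw : IsWeighting n w)
    (hopt : lagPoly E w = lag E) {i : ℕ} (hi : 0 < w i) :
    lagPoly (link E i) w = r * lag E := by
  have hterm : ∀ m, w m * lagPoly (link E m) w = w m * lagPoly (link E i) w := fun m => by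
    rcases (hw.1 m).eq_or_lt with hm | hm
    · rw [← hm, zero_mul, zero_mul]
    · rw [lagPoly_link_eq_of_optimal hw hopt hm hi]
  rw [← hopt, ← sum_mul_lagPoly_link hE, sum_congr rfl fun m _ => hterm m, ← sum_mul, hw.2.2,
    one_mul]

lemma exists_optimal_support_subset_erase (hw : IsWeighting n w) (hopt : lagPoly E w = lag E)
    {i j : ℕ} (hij : i ≠ j) (hi : 0 < w i) (hj : 0 < w j)
    (hE : ∀ e ∈ E, i ∈ e → j ∉ e) :
    ∃ v, IsWeighting n v ∧ lagPoly E v = lag E ∧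
      (range n).filter (v · ≠ 0) ⊆ ((range n).filter (w · ≠ 0)).erase j := by
  refine ⟨transfer w i j (w j), hw.transfer hij (hw.lt_of_ne_zero hi.ne')
    (hw.lt_of_ne_zero hj.ne') hj.le le_rfl, ?_, fun m hm => ?_⟩
  · rw [lagPoly_transfer E hij, lagPoly_link_eq_of_optimal hw hopt hi hj,
      lagPoly_link_link_eq_zero E hE, hopt]
    ring
  obtain ⟨hmn, hm⟩ := mem_filter.1 hm
  have hmj : m ≠ j := by rintro rfl; simp [transfer_apply_right hij] at hm
  refine mem_erase.2 ⟨hmj, mem_filter.2 ⟨hmn, ?_⟩⟩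
  rcases eq_or_ne m i with rfl | hmi
  · exact hi.ne'
  · rwa [transfer_apply_of_ne hmi hmj] at hm

end Optimal

/-- Frankl–Rödl: for an optimal weighting with k nonzero weights (x₀,…,x_{k-1})
and minimal support, (a) λ(E_i, x) = λ(E_j, x) = r·λ(G) and (b) some edge
contains both i and j, for every pair i < j < k. -/
theorem stmt_3 (r n k : ℕ) (E : Finset (Finset ℕ))
    (hE : E ⊆ (Finset.range n).powersetCard r)
    (w : ℕ → ℝ) (hw : IsWeighting n w) (hopt : lagPoly E w = lag E)
    (hpos : ∀ i, i < k → 0 < w i) (hzero : ∀ i, k ≤ i → w i = 0)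
    (hmin : ∀ w' : ℕ → ℝ, IsWeighting n w' → lagPoly E w' = lag E →
      k ≤ ((Finset.range n).filter (fun i => w' i ≠ 0)).card) :
    ∀ i j : ℕ, i < j → j < k →
      (lagPoly (link E i) w = r * lag E ∧ lagPoly (link E j) w = r * lag E) ∧
      ∃ e ∈ E, i ∈ e ∧ j ∈ e := by
  intro i j hij hjk
  have hi := hpos i (hij.trans hjk)
  have hj := hpos j hjk
  refine ⟨⟨lagPoly_link_eq_mul_lag hE hw hopt hi, lagPoly_link_eq_mul_lag hE hw hopt hj⟩,
    ?_⟩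
  by_contra! hne
  obtain ⟨v, hv, hvopt, hsupp⟩ :=
    exists_optimal_support_subset_erase hw hopt hij.ne hi hj hne
  have hsupp_w : (range n).filter (w · ≠ 0) = range k := by
    ext m
    simp only [mem_filter, mem_range]
    refine ⟨fun ⟨_, hm⟩ => not_le.1 fun h => hm (hzero m h), fun hm => ?_⟩
    exact ⟨hw.lt_of_ne_zero (hpos m hm).ne', (hpos m hm).ne'⟩
  have hcard := card_le_card hsupp
  rw [hsupp_w, card_erase_of_mem (mem_range.2 hjk), card_range] at hcard
  have := hmin v hv hvopt
  omega
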